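/- Let G and G' be groups that are elementarily equivalent in the first-order language of groups, and suppose there exists a natural number N such that every element of the commutator subgroup [G,G] is a product of at most N commutators of elements of G. Then every element of [G',G'] is a product of at most N commutators of elements of G', and the groups [G,G] and [G',G'] are elementarily equivalent in the first-order language of groups. -/

import Mathlib

open FirstOrder
open scoped commutatorElement

/-- The function symbols of the first-order language of groups:
multiplication, inverse, and identity. -/
inductive GroupFunc : ℕ → Type
  | mul : GroupFunc 2
  | inv : GroupFunc 1
  | one : GroupFunc 0

/-- The first-order language of groups. -/
def groupLang : FirstOrder.Language :=
  { Functions := GroupFunc, Relations := fun _ => Empty }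

/-- Any group is a structure for the language of groups in the natural way. -/
instance groupLangStructure (G : Type*) [Group G] : groupLang.Structure G where
  funMap {_} f v :=
    match f with
    | GroupFunc.mul => v 0 * v 1
    | GroupFunc.inv => (v 0)⁻¹
    | GroupFunc.one => 1
  RelMap {_} r := r.elim

/-- Two groups are elementarily equivalent in the first-order language of groups
if they satisfy exactly the same first-order sentences of the group language. -/
def GroupElemEquiv (G H : Type*) [Group G] [Group H] : Prop :=
  groupLang.ElementarilyEquivalent G H

/-- Two rings are elementarily equivalent in the first-order language of rings
if they satisfy exactly the same first-order sentences of the ring language. -/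
def RingElemEquiv (R S : Type*) [Ring R] [Ring S] : Prop :=
  letI := FirstOrder.Ring.compatibleRingOfRing R
  letI := FirstOrder.Ring.compatibleRingOfRing S
  FirstOrder.Language.ring.ElementarilyEquivalent R S

/-- `g` is a product of at most `N` commutators of elements of `G`. -/
def IsProdOfAtMostNCommutators {G : Type*} [Group G] (N : ℕ) (g : G) : Prop :=
  ∃ l : List (G × G), l.length ≤ N ∧ g = (l.map fun q => ⁅q.1, q.2⁆).prod

/-!
Commutator width at most `N` is first-order: it says that every product of `N + 1` commutators
is a product of `N` commutators, so it passes from `G` to `G'`. In both groups the commutator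
subgroup is then defined by the same formula "`x` is a product of `N` commutators", and
relativizing every sentence to this formula transfers elementary equivalence from `G ≅ G'`
to `[G, G] ≅ [G', G']`.
-/

namespace FirstOrder.Language

variable {L : Language} {M N : Type*} [L.Structure M] [L.Structure N] {α : Type*} {n : ℕ}

namespace BoundedFormula

def relativize (φ : L.Formula Unit) : ∀ {n}, L.BoundedFormula α n → L.BoundedFormula α n
  | _, falsum => falsum
  | _, equal t₁ t₂ => equal t₁ t₂
  | _, rel R ts => rel R ts
  | _, imp ψ₁ ψ₂ => (relativize φ ψ₁).imp (relativize φ ψ₂)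
  | n, all ψ => ((relabel (fun _ => Sum.inr (Fin.last n)) φ).imp (relativize φ ψ)).all

theorem realize_formula_relabel_last (φ : L.Formula Unit) (v : α → M) (xs : Fin (n + 1) → M) :
    (relabel (fun _ => Sum.inr (Fin.last n)) φ : L.BoundedFormula α (n + 1)).Realize v xs ↔
      φ.Realize fun _ => xs (Fin.last n) := by
  rw [realize_relabel, Formula.Realize]
  exact iff_of_eq (congrArg _ (Subsingleton.elim _ _))

theorem realize_relativize {φ : L.Formula Unit} (f : M ↪[L] N)
    (hφ : ∀ y, φ.Realize (fun _ => y) ↔ y ∈ Set.range f) (ψ : L.BoundedFormula α n)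
    (v : α → M) (xs : Fin n → M) :
    (relativize φ ψ).Realize (f ∘ v) (f ∘ xs) ↔ ψ.Realize v xs := by
  induction ψ with
  | falsum => exact Iff.rfl
  | equal t₁ t₂ => exact (IsAtomic.equal t₁ t₂).isQF.realize_embedding f
  | rel R ts => exact (IsAtomic.rel R ts).isQF.realize_embedding f
  | imp ψ₁ ψ₂ ih₁ ih₂ => simp only [relativize, realize_imp, ih₁, ih₂]
  | all ψ ih =>
    simp only [relativize, realize_all, realize_imp, realize_formula_relabel_last,
      Fin.snoc_last, hφ, Set.forall_mem_range]
    refine forall_congr' fun x => ?_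
    rw [← Fin.comp_snoc, ih]

end BoundedFormula

theorem Embedding.realize_sentence_iff_relativize {φ : L.Formula Unit} (f : M ↪[L] N)
    (hφ : ∀ y, φ.Realize (fun _ => y) ↔ y ∈ Set.range f) (ψ : L.Sentence) :
    M ⊨ ψ ↔ N ⊨ BoundedFormula.relativize φ ψ := by
  have h := BoundedFormula.realize_relativize f hφ ψ default default
  rw [Unique.eq_default (f ∘ default), Unique.eq_default (f ∘ default)] at h
  exact h.symm

theorem ElementarilyEquivalent.of_embeddings_definedBy {M' N' : Type*} [L.Structure M']
    [L.Structure N'] (hN : N ≅[L] N') {φ : L.Formula Unit} (f : M ↪[L] N) (f' : M' ↪[L] N')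
    (hf : ∀ y, φ.Realize (fun _ => y) ↔ y ∈ Set.range f)
    (hf' : ∀ y, φ.Realize (fun _ => y) ↔ y ∈ Set.range f') : M ≅[L] M' :=
  elementarilyEquivalent_iff.2 fun ψ => by
    rw [f.realize_sentence_iff_relativize hf, f'.realize_sentence_iff_relativize hf']
    exact hN.realize_sentence _

end FirstOrder.Language

section GroupLanguage

open FirstOrder.Language

variable {α : Type*} {G H : Type*} [Group G] [Group H]

instance : Mul (groupLang.Term α) := ⟨Functions.apply₂ (L := groupLang) GroupFunc.mul⟩
instance : Inv (groupLang.Term α) := ⟨Functions.apply₁ (L := groupLang) GroupFunc.inv⟩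
instance : One (groupLang.Term α) := ⟨Constants.term (L := groupLang) GroupFunc.one⟩
instance : Bracket (groupLang.Term α) (groupLang.Term α) :=
  ⟨fun t₁ t₂ => t₁ * t₂ * t₁⁻¹ * t₂⁻¹⟩

@[simp] theorem groupLang.realize_mul (t₁ t₂ : groupLang.Term α) (v : α → G) :
    (t₁ * t₂).realize v = t₁.realize v * t₂.realize v := rfl

@[simp] theorem groupLang.realize_inv (t : groupLang.Term α) (v : α → G) :
    t⁻¹.realize v = (t.realize v)⁻¹ := rfl

@[simp] theorem groupLang.realize_one (v : α → G) : (1 : groupLang.Term α).realize v = 1 := rfl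

@[simp] theorem groupLang.realize_bracket (t₁ t₂ : groupLang.Term α) (v : α → G) :
    ⁅t₁, t₂⁆.realize v = ⁅t₁.realize v, t₂.realize v⁆ := rfl

@[simp] theorem groupLang.realize_list_prod (ts : List (groupLang.Term α)) (v : α → G) :
    ts.prod.realize v = (ts.map (Term.realize v)).prod := by
  induction ts with
  | nil => rfl
  | cons t ts ih => simp [ih]

def MonoidHom.toGroupLangEmbedding (f : G →* H) (hf : Function.Injective f) :
    G ↪[groupLang] H where
  toFun := f
  inj' := hf
  map_fun' {_} F x := by cases F <;> simp [Structure.funMap]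
  map_rel' {_} r := r.elim

theorem MonoidHom.range_toGroupLangEmbedding (f : G →* H) (hf : Function.Injective f) :
    Set.range (f.toGroupLangEmbedding hf) = f.range := rfl

end GroupLanguage

section CommutatorWidth

open FirstOrder.Language

variable {G : Type*} [Group G] {N : ℕ} {g : G}

theorem isProdOfAtMostNCommutators_iff_exists_length_eq :
    IsProdOfAtMostNCommutators N g ↔
      ∃ l : List (G × G), l.length = N ∧ g = (l.map fun q => ⁅q.1, q.2⁆).prod := by
  refine ⟨fun ⟨l, hl, hg⟩ => ?_, fun ⟨l, hl, hg⟩ => ⟨l, hl.le, hg⟩⟩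
  refine ⟨l ++ List.replicate (N - l.length) (1, 1), by simp; omega, ?_⟩
  simp [hg]

theorem isProdOfAtMostNCommutators_iff_exists_fin :
    IsProdOfAtMostNCommutators N g ↔
      ∃ x y : Fin N → G, g = (List.ofFn fun k => ⁅x k, y k⁆).prod := by
  rw [isProdOfAtMostNCommutators_iff_exists_length_eq]
  constructor
  · rintro ⟨l, rfl, rfl⟩
    refine ⟨fun k => l[k].1, fun k => l[k].2, ?_⟩
    conv_lhs => rw [← List.ofFn_getElem (xs := l)]
    rw [List.map_ofFn]
    rfl
  · rintro ⟨x, y, rfl⟩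
    exact ⟨List.ofFn fun k => (x k, y k), by simp, by simp [List.map_ofFn, Function.comp_def]⟩

theorem isProdOfAtMostNCommutators_one : IsProdOfAtMostNCommutators N (1 : G) :=
  ⟨[], Nat.zero_le N, rfl⟩

theorem IsProdOfAtMostNCommutators.commutatorElement_mul (x y : G)
    (hg : IsProdOfAtMostNCommutators N g) :
    IsProdOfAtMostNCommutators (N + 1) (⁅x, y⁆ * g) := by
  obtain ⟨l, hl, rfl⟩ := hg
  exact ⟨(x, y) :: l, Nat.succ_le_succ hl, rfl⟩

theorem IsProdOfAtMostNCommutators.mem_commutator (hg : IsProdOfAtMostNCommutators N g) :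
    g ∈ commutator G := by
  obtain ⟨l, -, rfl⟩ := hg
  refine Subgroup.list_prod_mem _ fun c hc => ?_
  obtain ⟨q, -, rfl⟩ := List.mem_map.1 hc
  exact Subgroup.commutator_mem_commutator (Subgroup.mem_top _) (Subgroup.mem_top _)

theorem forall_mem_commutator_isProdOfAtMostNCommutators_iff :
    (∀ g ∈ commutator G, IsProdOfAtMostNCommutators N g) ↔
      ∀ g : G, IsProdOfAtMostNCommutators (N + 1) g → IsProdOfAtMostNCommutators N g := by
  refine ⟨fun h g hg => h g hg.mem_commutator, fun h g hg => ?_⟩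
  rw [commutator_eq_closure] at hg
  induction hg using Subgroup.closure_induction_left with
  | one => exact isProdOfAtMostNCommutators_one
  | mul_left c hc g _ ih =>
    obtain ⟨x, y, rfl⟩ := hc
    exact h _ (ih.commutatorElement_mul x y)
  | inv_mul_cancel c hc g _ ih =>
    obtain ⟨x, y, rfl⟩ := hc
    rw [commutatorElement_inv]
    exact h _ (ih.commutatorElement_mul y x)

noncomputable def isProdOfAtMostNCommutatorsFormula (N : ℕ) : groupLang.Formula Unit :=
  Formula.iExs (Fin N ⊕ Fin N) <| Term.equal (var (Sum.inl ())) <| List.prod <|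
    List.ofFn fun k => ⁅(var (Sum.inr (Sum.inl k)) : groupLang.Term (Unit ⊕ (Fin N ⊕ Fin N))),
      var (Sum.inr (Sum.inr k))⁆

theorem realize_isProdOfAtMostNCommutatorsFormula :
    (isProdOfAtMostNCommutatorsFormula N).Realize (fun _ => g) ↔
      IsProdOfAtMostNCommutators N g := by
  simp only [isProdOfAtMostNCommutatorsFormula, Formula.realize_iExs, Formula.realize_equal,
    groupLang.realize_list_prod, List.map_ofFn, Function.comp_def, groupLang.realize_bracket,
    Term.realize_var, Sum.elim_inl, Sum.elim_inr, isProdOfAtMostNCommutators_iff_exists_fin]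
  exact ⟨fun ⟨i, hi⟩ => ⟨_, _, hi⟩, fun ⟨x, y, hxy⟩ => ⟨Sum.elim x y, hxy⟩⟩

noncomputable def commutatorWidthLeSentence (N : ℕ) : groupLang.Sentence :=
  Formula.iAlls Unit <| Formula.relabel Sum.inr <|
    (isProdOfAtMostNCommutatorsFormula (N + 1)).imp (isProdOfAtMostNCommutatorsFormula N)

theorem realize_commutatorWidthLeSentence :
    G ⊨ commutatorWidthLeSentence N ↔
      ∀ g ∈ commutator G, IsProdOfAtMostNCommutators N g := by
  rw [forall_mem_commutator_isProdOfAtMostNCommutators_iff, commutatorWidthLeSentence,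
    Sentence.Realize, Formula.realize_iAlls]
  simp only [Formula.realize_relabel, Formula.realize_imp]
  exact ⟨fun h g hg => realize_isProdOfAtMostNCommutatorsFormula.1
      (h (fun _ => g) (realize_isProdOfAtMostNCommutatorsFormula.2 hg)),
    fun h i hi => realize_isProdOfAtMostNCommutatorsFormula.2
      (h (i ()) (realize_isProdOfAtMostNCommutatorsFormula.1 hi))⟩

theorem realize_isProdOfAtMostNCommutatorsFormula_iff_mem_range
    (h : ∀ g ∈ commutator G, IsProdOfAtMostNCommutators N g) (g : G) :
    (isProdOfAtMostNCommutatorsFormula N).Realize (fun _ => g) ↔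
      g ∈ Set.range ((commutator G).subtype.toGroupLangEmbedding
        (commutator G).subtype_injective) := by
  rw [realize_isProdOfAtMostNCommutatorsFormula, MonoidHom.range_toGroupLangEmbedding,
    Subgroup.range_subtype, SetLike.mem_coe]
  exact ⟨IsProdOfAtMostNCommutators.mem_commutator, h g⟩

end CommutatorWidth

/-- If `G` and `G'` are elementarily equivalent groups and every element of `[G,G]` is a
product of at most `N` commutators of elements of `G`, then every element of `[G',G']` is a
product of at most `N` commutators of elements of `G'`, and the commutator subgroups
`[G,G]` and `[G',G']` are elementarily equivalent in the first-order language of groups. -/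
theorem commutator_elementarilyEquivalent_of_elementarilyEquivalent
    (G G' : Type) [Group G] [Group G']
    (heq : GroupElemEquiv G G') (N : ℕ)
    (hG : ∀ g ∈ commutator G, IsProdOfAtMostNCommutators N g) :
    (∀ g ∈ commutator G', IsProdOfAtMostNCommutators N g) ∧
      GroupElemEquiv (commutator G) (commutator G') := by
  have hG' : ∀ g ∈ commutator G', IsProdOfAtMostNCommutators N g :=
    realize_commutatorWidthLeSentence.1 <|
      (heq.realize_sentence _).1 (realize_commutatorWidthLeSentence.2 hG)
  exact ⟨hG', heq.of_embeddings_definedBy _ _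
    (realize_isProdOfAtMostNCommutatorsFormula_iff_mem_range hG)
    (realize_isProdOfAtMostNCommutatorsFormula_iff_mem_range hG')⟩
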